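/- arXiv:1608.03478 — 3 statements merged into one kernel-verified Lean document; each statement's English description precedes it below -/
import Mathlib

section
/- Let C be a free abelian group with basis (g_i)_{i∈ℕ}, (m_i) positive integers, and for ω ∈ {0,1}^ℕ let N_ω = ⟨m_i g_i : ω(i)=1⟩. If ω_n → ω_∞ in the product topology on {0,1}^ℕ, then for every finite subset F of C there exists n₀ such that for all n ≥ n₀, N_{ω_n} ∩ F = N_{ω_∞} ∩ F. -/
/-!
An element `x = ∑ cᵢ gᵢ` lies in `N_ω` exactly when every coefficient `cᵢ` is divisible by `mᵢ`
and vanishes unless `ω i = 1`. Membership of `x` therefore depends only on `ω` restricted to the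
finite support of `x`, and for a finite `F` on a finite set of coordinates, on which `ω_n`
eventually agrees with `ω_∞` since the topology of `{0,1}^ℕ` is that of pointwise convergence.
-/

open Filter Topology

section ScaledBasisClosure

variable {ι C : Type*} [AddCommGroup C] (b : Module.Basis ι ℤ C) (m : ι → ℤ) (p : ι → Prop)

theorem mem_closure_smul_basis_iff (x : C) :
    x ∈ AddSubgroup.closure {y : C | ∃ i, p i ∧ y = m i • b i} ↔
      ∀ i, (¬ p i → b.repr x i = 0) ∧ m i ∣ b.repr x i := by
  constructor
  · intro hx
    induction hx using AddSubgroup.closure_induction with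
    | mem y hy =>
      obtain ⟨i, hi, rfl⟩ := hy
      intro j
      rcases eq_or_ne i j with rfl | hij
      · simp [hi]
      · simp [hij]
    | zero => simp
    | add y z _ _ hy hz =>
      intro i
      simp only [map_add, Finsupp.add_apply]
      exact ⟨fun hi => by rw [(hy i).1 hi, (hz i).1 hi, add_zero], dvd_add (hy i).2 (hz i).2⟩
    | neg y _ hy =>
      intro i
      simp only [map_neg, Finsupp.neg_apply, neg_eq_zero, dvd_neg]
      exact hy i
  · intro hx
    rw [← b.linearCombination_repr x, Finsupp.linearCombination_apply]
    refine AddSubgroup.sum_mem _ fun i hi => ?_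
    have hpi : p i := by_contra fun hpi => Finsupp.mem_support_iff.mp hi ((hx i).1 hpi)
    obtain ⟨k, hk⟩ := (hx i).2
    show b.repr x i • b i ∈ _
    rw [hk, mul_comm, mul_smul]
    exact zsmul_mem (AddSubgroup.subset_closure (Set.mem_ofPred.mpr ⟨i, hpi, rfl⟩)) k

theorem mem_closure_smul_basis_congr {q : ι → Prop} {x : C}
    (hpq : ∀ i ∈ (b.repr x).support, p i ↔ q i) :
    x ∈ AddSubgroup.closure {y : C | ∃ i, p i ∧ y = m i • b i} ↔
      x ∈ AddSubgroup.closure {y : C | ∃ i, q i ∧ y = m i • b i} := by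
  simp only [mem_closure_smul_basis_iff]
  refine forall_congr' fun i => and_congr_left' ?_
  by_cases hi : i ∈ (b.repr x).support
  · rw [hpq i hi]
  · simp [Finsupp.notMem_support_iff.mp hi]

end ScaledBasisClosure

theorem eventually_forall_finset_eq_of_tendsto_pi {α ι X : Type*} [TopologicalSpace X]
    [DiscreteTopology X] {l : Filter α} {ω : α → ι → X} {ω' : ι → X}
    (hω : Tendsto ω l (𝓝 ω')) (I : Finset ι) :
    ∀ᶠ n in l, ∀ i ∈ I, ω n i = ω' i :=
  (eventually_all_finset I).mpr fun i _ => by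
    simpa only [nhds_discrete, tendsto_pure] using tendsto_pi_nhds.mp hω i

theorem omega_subgroup_local_convergence_general (C : Type*) [AddCommGroup C]
    (b : Module.Basis ℕ ℤ C) (m : ℕ → ℕ)
    (ω : ℕ → ℕ → Bool) (ωinf : ℕ → Bool)
    (hconv : Filter.Tendsto ω Filter.atTop (nhds ωinf))
    (F : Finset C) :
    ∃ n₀ : ℕ, ∀ n : ℕ, n₀ ≤ n → ∀ x ∈ F,
      (x ∈ AddSubgroup.closure {y : C | ∃ i : ℕ, ω n i = true ∧ y = (m i : ℤ) • b i} ↔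
        x ∈ AddSubgroup.closure {y : C | ∃ i : ℕ, ωinf i = true ∧ y = (m i : ℤ) • b i}) := by
  obtain ⟨n₀, hn₀⟩ := eventually_atTop.mp <|
    eventually_forall_finset_eq_of_tendsto_pi hconv (F.biUnion fun x => (b.repr x).support)
  refine ⟨n₀, fun n hn x hx => mem_closure_smul_basis_congr b (fun i => (m i : ℤ)) _ fun i hi => ?_⟩
  rw [hn₀ n hn i (Finset.mem_biUnion.mpr ⟨x, hx, hi⟩)]

/-- If `ω_n → ω_∞` in the product topology on `{0,1}^ℕ`, then for every finite
`F ⊆ C` the subgroups `N_{ω_n}` and `N_{ω_∞}` eventually agree on `F`. -/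
theorem omega_subgroup_local_convergence (C : Type*) [AddCommGroup C]
    (b : Module.Basis ℕ ℤ C) (m : ℕ → ℕ) (hm : ∀ i, 1 ≤ m i)
    (ω : ℕ → ℕ → Bool) (ωinf : ℕ → Bool)
    (hconv : Filter.Tendsto ω Filter.atTop (nhds ωinf))
    (F : Finset C) :
    ∃ n₀ : ℕ, ∀ n : ℕ, n₀ ≤ n → ∀ x ∈ F,
      (x ∈ AddSubgroup.closure {y : C | ∃ i : ℕ, ω n i = true ∧ y = (m i : ℤ) • b i} ↔
        x ∈ AddSubgroup.closure {y : C | ∃ i : ℕ, ωinf i = true ∧ y = (m i : ℤ) • b i}) :=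
  omega_subgroup_local_convergence_general C b m ω ωinf hconv F
end

section
/- There exist a finitely generated group H and a central subgroup C of H such that C is isomorphic to the direct sum ⊕_{n∈ℕ} ℤ. -/
/-!
P. Hall's example. Over `R = ℤ[T, T⁻¹]`, the matrices `[[1, x, z], [0, Tⁿ, y], [0, 0, 1]]` form a
group generated by `e₁₂(1)`, `e₂₃(1)` and `d = diag(1, T, 1)`. Conjugating by `dᵏ` turns `e₁₂(1)`
into `e₁₂(Tᵏ)`, and the commutator of `e₁₂(Tᵏ)` with `e₂₃(1)` is `e₁₃(Tᵏ)`. Hence the group contains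
every `e₁₃(z)`, and these are central because `e₁₃` commutes with all three generators. So the
center contains a copy of the additive group of `ℤ[T, T⁻¹]`, free abelian on the monomials `Tᵏ`.
-/

open Matrix LaurentPolynomial

theorem Subgroup.exists_central_mulEquiv_of_le_closure {G : Type*} [Group G] {s : Set G}
    (hs : s.Finite) {C : Subgroup G} (hC : C ≤ closure s) (hcent : closure s ≤ centralizer C) :
    ∃ S : Finset (closure s), closure (S : Set (closure s)) = ⊤ ∧
      ∃ C' : Subgroup (closure s), C' ≤ center _ ∧ Nonempty (C' ≃* C) := by
  refine ⟨(hs.preimage Subtype.val_injective.injOn).toFinset, ?_, C.subgroupOf _, ?_,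
    ⟨subgroupOfEquivOfLe hC⟩⟩
  · rw [Set.Finite.coe_toFinset]
    exact closure_closure_coe_preimage
  · intro c hc
    rw [mem_center_iff]
    intro g
    exact Subtype.ext (mem_centralizer_iff.1 (hcent g.2) c hc).symm

theorem LaurentPolynomial.closure_range_T_int :
    AddSubgroup.closure (Set.range (T : ℤ → ℤ[T;T⁻¹])) = ⊤ := by
  refine (AddSubgroup.eq_top_iff' _).2 fun p => ?_
  induction p using LaurentPolynomial.induction_on' with
  | add p q hp hq => exact add_mem hp hq
  | C_mul_T n a =>
    rw [← smul_eq_C_mul]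
    exact zsmul_mem (AddSubgroup.subset_closure (Set.mem_range_self n)) a

namespace HallGroup

variable {R : Type*} [CommRing R]

def hallMatrix (x y z u : R) : Matrix (Fin 3) (Fin 3) R := !![1, x, z; 0, u, y; 0, 0, 1]

theorem hallMatrix_mul (x y z u x' y' z' u' : R) :
    hallMatrix x y z u * hallMatrix x' y' z' u' =
      hallMatrix (x' + x * u') (y + u * y') (z + z' + x * y') (u * u') := by
  ext i j
  fin_cases i <;> fin_cases j <;> simp [hallMatrix, mul_apply, Fin.sum_univ_three] <;> ring

theorem hallMatrix_zero_zero_zero_one : hallMatrix (0 : R) 0 0 1 = 1 := by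
  ext i j
  fin_cases i <;> fin_cases j <;> rfl

variable (R)

def transvection12 : Multiplicative R →* GL (Fin 3) R :=
  MonoidHom.toHomUnits
    { toFun := fun x => hallMatrix x.toAdd 0 0 1
      map_one' := hallMatrix_zero_zero_zero_one
      map_mul' := fun x x' => by simp [hallMatrix_mul, add_comm] }

def transvection23 : Multiplicative R →* GL (Fin 3) R :=
  MonoidHom.toHomUnits
    { toFun := fun y => hallMatrix 0 y.toAdd 0 1
      map_one' := hallMatrix_zero_zero_zero_one
      map_mul' := fun y y' => by simp [hallMatrix_mul] }

def transvection13 : Multiplicative R →* GL (Fin 3) R :=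
  MonoidHom.toHomUnits
    { toFun := fun z => hallMatrix 0 0 z.toAdd 1
      map_one' := hallMatrix_zero_zero_zero_one
      map_mul' := fun z z' => by simp [hallMatrix_mul] }

def dilation : Rˣ →* GL (Fin 3) R :=
  Units.map
    { toFun := fun u => hallMatrix 0 0 0 u
      map_one' := hallMatrix_zero_zero_zero_one
      map_mul' := fun u u' => by simp [hallMatrix_mul] }

variable {R}

theorem transvection13_injective : Function.Injective (transvection13 R) := by
  intro z z' h
  have := congrArg (fun g : GL (Fin 3) R => (g : Matrix (Fin 3) (Fin 3) R) 0 2) h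
  simpa [transvection13, hallMatrix] using this

theorem transvection12_mul_dilation (u : Rˣ) (x : R) :
    transvection12 R (.ofAdd x) * dilation R u =
      dilation R u * transvection12 R (.ofAdd (u * x)) := by
  ext : 1
  simp [transvection12, dilation, hallMatrix_mul, mul_comm]

theorem transvection12_mul_transvection23 (x y : R) :
    transvection12 R (.ofAdd x) * transvection23 R (.ofAdd y) =
      transvection13 R (.ofAdd (x * y)) * transvection23 R (.ofAdd y) *
        transvection12 R (.ofAdd x) := by
  ext : 1
  simp [transvection12, transvection23, transvection13, hallMatrix_mul]

theorem commute_transvection13_transvection12 (x z : R) :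
    Commute (transvection13 R (.ofAdd z)) (transvection12 R (.ofAdd x)) := by
  ext : 1
  simp [transvection12, transvection13, hallMatrix_mul]

theorem commute_transvection13_transvection23 (y z : R) :
    Commute (transvection13 R (.ofAdd z)) (transvection23 R (.ofAdd y)) := by
  ext : 1
  simp [transvection23, transvection13, hallMatrix_mul, add_comm]

theorem commute_transvection13_dilation (u : Rˣ) (z : R) :
    Commute (transvection13 R (.ofAdd z)) (dilation R u) := by
  ext : 1
  simp [dilation, transvection13, hallMatrix_mul, mul_comm]

def hallSubgroup (u : Rˣ) : Subgroup (GL (Fin 3) R) :=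
  Subgroup.closure {transvection12 R (.ofAdd 1), transvection23 R (.ofAdd 1), dilation R u}

theorem transvection12_zpow_mem_hallSubgroup (u : Rˣ) (k : ℤ) :
    transvection12 R (.ofAdd ((u ^ k : Rˣ) : R)) ∈ hallSubgroup u := by
  have hconj : transvection12 R (.ofAdd ((u ^ k : Rˣ) : R)) =
      (dilation R u ^ k)⁻¹ * transvection12 R (.ofAdd 1) * dilation R u ^ k := by
    rw [← map_zpow, mul_assoc, transvection12_mul_dilation, ← mul_assoc, inv_mul_cancel,
      one_mul, mul_one]
  have h12 : transvection12 R (.ofAdd 1) ∈ hallSubgroup u := Subgroup.subset_closure (by simp)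
  have hd : dilation R u ∈ hallSubgroup u := Subgroup.subset_closure (by simp)
  rw [hconj]
  exact mul_mem (mul_mem (inv_mem (zpow_mem hd k)) h12) (zpow_mem hd k)

theorem transvection13_mem_hallSubgroup (u : Rˣ) {z : R}
    (hz : z ∈ AddSubgroup.closure (Set.range fun k : ℤ => ((u ^ k : Rˣ) : R))) :
    transvection13 R (.ofAdd z) ∈ hallSubgroup u := by
  suffices AddSubgroup.closure (Set.range fun k : ℤ => ((u ^ k : Rˣ) : R)) ≤
      Subgroup.toAddSubgroup' ((hallSubgroup u).comap (transvection13 R)) from this hz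
  rw [AddSubgroup.closure_le]
  rintro _ ⟨k, rfl⟩
  set a : R := ((u ^ k : Rˣ) : R)
  have hcomm : transvection13 R (.ofAdd a) =
      transvection12 R (.ofAdd a) * transvection23 R (.ofAdd 1) *
        (transvection12 R (.ofAdd a))⁻¹ * (transvection23 R (.ofAdd 1))⁻¹ := by
    rw [transvection12_mul_transvection23, mul_one]
    group
  have h12 := transvection12_zpow_mem_hallSubgroup u k
  have h23 : transvection23 R (.ofAdd 1) ∈ hallSubgroup u := Subgroup.subset_closure (by simp)
  change transvection13 R (.ofAdd a) ∈ hallSubgroup u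
  rw [hcomm]
  exact mul_mem (mul_mem (mul_mem h12 h23) (inv_mem h12)) (inv_mem h23)

theorem hallSubgroup_le_centralizer (u : Rˣ) :
    hallSubgroup u ≤ Subgroup.centralizer (transvection13 R).range := by
  rw [hallSubgroup, Subgroup.closure_le]
  rintro g hg - ⟨z, rfl⟩
  rcases hg with rfl | rfl | rfl
  exacts [commute_transvection13_transvection12 _ _, commute_transvection13_transvection23 _ _,
    commute_transvection13_dilation _ _]

noncomputable def unitT : ℤ[T;T⁻¹]ˣ := (AddMonoidAlgebra.of ℤ ℤ).toHomUnits (.ofAdd 1)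

theorem val_unitT_zpow (k : ℤ) : ((unitT ^ k : ℤ[T;T⁻¹]ˣ) : ℤ[T;T⁻¹]) = T k := by
  rw [unitT, ← map_zpow, MonoidHom.coe_toHomUnits, AddMonoidAlgebra.of_apply, toAdd_zpow,
    toAdd_ofAdd, smul_eq_mul, mul_one]
  rfl

theorem range_transvection13_le_hallSubgroup_unitT :
    (transvection13 ℤ[T;T⁻¹]).range ≤ hallSubgroup unitT := by
  rintro _ ⟨z, rfl⟩
  apply transvection13_mem_hallSubgroup
  simp only [val_unitT_zpow, closure_range_T_int]
  exact AddSubgroup.mem_top _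

end HallGroup

open HallGroup in
/-- There is a finitely generated group `H` with a central subgroup isomorphic to
the free abelian group `⊕_{n∈ℕ} ℤ`. -/
theorem exists_fg_group_with_central_free_abelian_subgroup :
    ∃ (H : Type) (_ : Group H) (S : Finset H),
      Subgroup.closure (S : Set H) = ⊤ ∧
        ∃ C : Subgroup H, C ≤ Subgroup.center H ∧
          Nonempty (C ≃* Multiplicative (ℕ →₀ ℤ)) := by
  obtain ⟨S, hS, C, hC, ⟨e⟩⟩ := Subgroup.exists_central_mulEquiv_of_le_closure (Set.toFinite _)
    range_transvection13_le_hallSubgroup_unitT (hallSubgroup_le_centralizer unitT)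
  have hfree : Multiplicative ℤ[T;T⁻¹] ≃* Multiplicative (ℕ →₀ ℤ) :=
    AddEquiv.toMultiplicative
      (AddMonoidAlgebra.coeffAddEquiv.trans (Finsupp.domCongr Equiv.intEquivNat))
  exact ⟨_, inferInstance, S, hS, C, hC,
    ⟨e.trans ((MonoidHom.ofInjective transvection13_injective).symm.trans hfree)⟩⟩
end

section
/- Let G be a group generated by a finite set S and N a normal subgroup of G. Every self-avoiding walk in the Cayley graph of G/N with respect to the image of S lifts to a self-avoiding walk in the Cayley graph of (G, S); consequently the number of self-avoiding walks of length n from the identity in Cay(G/N, S̄) is at most that in Cay(G, S), and hence μ(Cay(G/N, S̄)) ≤ μ(Cay(G, S)). -/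
/-- The Cayley graph of `(G, S)`: vertices are elements of `G`, and `g ~ h` iff
`g ≠ h` and `g⁻¹ * h ∈ S ∪ S⁻¹`. -/
def cayleyGraph (G : Type*) [Group G] (S : Set G) : SimpleGraph G where
  Adj g h := g ≠ h ∧ g⁻¹ * h ∈ S ∪ S⁻¹
  symm := by
    constructor
    rintro g h ⟨hne, hmem⟩
    refine ⟨hne.symm, ?_⟩
    have he : h⁻¹ * g = (g⁻¹ * h)⁻¹ := by group
    rw [he]
    rcases hmem with hs | hs
    · exact Or.inr (Set.inv_mem_inv.mpr hs)
    · exact Or.inl (Set.mem_inv.mp hs)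
  loopless := ⟨fun g h => h.1 rfl⟩

/-- The number of self-avoiding walks (paths) of length `n` starting at `o`. -/
noncomputable def sawCount {V : Type*} (G : SimpleGraph V) (o : V) (n : ℕ) : ℕ :=
  Nat.card {p : Σ v : V, G.Walk o v // p.2.IsPath ∧ p.2.length = n}

/-! Lifting is done one edge at a time: an edge `φ g ~ b` of `Cay(H, φ S)` has label
`(φ g)⁻¹ b = φ s` for some `s ∈ S ∪ S⁻¹`, so `g ~ g s` is an edge of `Cay(G, S)` over
it. A lift of a self-avoiding walk is self-avoiding because its support maps onto a
duplicate-free list, and distinct walks have distinct lifts since a walk is determined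
by its support. -/

open SimpleGraph

namespace SimpleGraph

variable {V W : Type*} {G : SimpleGraph V} {H : SimpleGraph W}

def LiftsAdj (G : SimpleGraph V) (H : SimpleGraph W) (f : V → W) : Prop :=
  ∀ ⦃u : V⦄ ⦃b : W⦄, H.Adj (f u) b → ∃ u', G.Adj u u' ∧ f u' = b

namespace Walk

lemma sigma_eq_of_support_eq {u v w : V} {p : G.Walk u v} {q : G.Walk u w}
    (h : p.support = q.support) : (⟨v, p⟩ : Σ x, G.Walk u x) = ⟨w, q⟩ := by
  obtain rfl : v = w := by
    rw [← p.getLast_support, ← q.getLast_support]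
    simp only [h]
  rw [ext_support h]

lemma finite_sigma_length (hG : ∀ v, (G.neighborSet v).Finite) (u : V) (n : ℕ) :
    Finite {p : Σ v, G.Walk u v // p.2.length = n} := by
  induction n generalizing u with
  | zero =>
    refine Finite.of_surjective
      (fun _ : Unit => (⟨⟨u, nil⟩, rfl⟩ : {p : Σ v, G.Walk u v // p.2.length = 0})) ?_
    rintro ⟨⟨v, _ | ⟨hadj, p⟩⟩, hp⟩
    · exact ⟨(), rfl⟩
    · simp at hp
  | succ n ih =>
    have : Finite (G.neighborSet u) := (hG u).to_subtype
    refine Finite.of_surjective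
      (fun x : Σ w : G.neighborSet u, {p : Σ v, G.Walk w v // p.2.length = n} =>
        (⟨⟨x.2.1.1, cons x.1.2 x.2.1.2⟩, congrArg (· + 1) x.2.2⟩ :
          {p : Σ v, G.Walk u v // p.2.length = n + 1})) ?_
    rintro ⟨⟨v, _ | ⟨hadj, p⟩⟩, hp⟩
    · simp at hp
    · exact ⟨⟨⟨_, hadj⟩, ⟨⟨v, p⟩, by simpa using hp⟩⟩, rfl⟩

lemma finite_isPath_length (hG : ∀ v, (G.neighborSet v).Finite) (u : V) (n : ℕ) :
    Finite {p : Σ v, G.Walk u v // p.2.IsPath ∧ p.2.length = n} :=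
  have := finite_sigma_length hG u n
  Finite.of_injective (fun p => (⟨p.1, p.2.2⟩ : {p : Σ v, G.Walk u v // p.2.length = n}))
    fun _ _ h => Subtype.ext (by simpa using h)

end Walk

namespace LiftsAdj

variable {f : V → W}

lemma exists_walk_lift (hf : LiftsAdj G H f) {a b : W} (p : H.Walk a b) {u : V}
    (hu : f u = a) :
    ∃ (w : V) (q : G.Walk u w), q.length = p.length ∧ f w = b ∧
      q.support.map f = p.support := by
  induction p generalizing u with
  | nil => exact ⟨u, Walk.nil, rfl, hu, by simp [hu]⟩
  | cons hadj p ih =>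
    subst hu
    obtain ⟨u', hu', rfl⟩ := hf hadj
    obtain ⟨w, q, hlen, hw, hsupp⟩ := ih rfl
    exact ⟨w, Walk.cons hu' q, by simp [hlen], hw, by simp [hsupp]⟩

lemma exists_path_lift (hf : LiftsAdj G H f) {a b : W} {p : H.Walk a b} (hp : p.IsPath)
    {u : V} (hu : f u = a) :
    ∃ (w : V) (q : G.Walk u w), q.IsPath ∧ q.length = p.length ∧ f w = b ∧
      q.support.map f = p.support := by
  obtain ⟨w, q, hlen, hw, hsupp⟩ := hf.exists_walk_lift p hu
  refine ⟨w, q, Walk.IsPath.mk' ?_, hlen, hw, hsupp⟩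
  exact (hsupp ▸ hp.support_nodup).of_map f

lemma sawCount_le (hf : LiftsAdj G H f) {u : V} {n : ℕ}
    (hfin : Finite {p : Σ v, G.Walk u v // p.2.IsPath ∧ p.2.length = n}) :
    sawCount H (f u) n ≤ sawCount G u n := by
  have exists_lift : ∀ p : {p : Σ w, H.Walk (f u) w // p.2.IsPath ∧ p.2.length = n},
      ∃ q : {q : Σ v, G.Walk u v // q.2.IsPath ∧ q.2.length = n},
        q.1.2.support.map f = p.1.2.support := by
    rintro ⟨⟨b, p⟩, hp, rfl⟩
    obtain ⟨w, q, hq, hlen, -, hsupp⟩ := hf.exists_path_lift hp rfl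
    exact ⟨⟨⟨w, q⟩, hq, hlen⟩, hsupp⟩
  choose lift hlift using exists_lift
  refine Nat.card_le_card_of_injective lift fun p p' h => ?_
  have := hlift p
  rw [h, hlift p'] at this
  exact Subtype.ext (Walk.sigma_eq_of_support_eq this.symm)

end LiftsAdj

end SimpleGraph

section Cayley

variable {G H : Type*} [Group G] [Group H]

lemma cayleyGraph_neighborSet_finite {S : Set G} (hS : S.Finite) (g : G) :
    ((cayleyGraph G S).neighborSet g).Finite :=
  ((hS.union hS.inv).image (g * ·)).subset fun h hh =>
    ⟨g⁻¹ * h, hh.2, mul_inv_cancel_left g h⟩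

lemma cayleyGraph_liftsAdj (φ : G →* H) (S : Set G) :
    LiftsAdj (cayleyGraph G S) (cayleyGraph H (φ '' S)) φ := by
  rintro g b ⟨hne, hmem⟩
  rw [← Set.image_inv, ← Set.image_union] at hmem
  obtain ⟨s, hs, hφs⟩ := hmem
  refine ⟨g * s, ⟨?_, by simpa using hs⟩, by simp [hφs]⟩
  rintro hgs
  exact hne (by rw [hgs, map_mul, hφs, mul_inv_cancel_left])

end Cayley

theorem saw_quotient_lift_and_mu_le_general (G : Type*) [Group G] (S : Finset G)
    (N : Subgroup G) [N.Normal] :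
    (∀ (v : G ⧸ N) (p : (cayleyGraph (G ⧸ N) ((QuotientGroup.mk : G → G ⧸ N) '' S)).Walk
        (1 : G ⧸ N) v), p.IsPath →
      ∃ (w : G) (q : (cayleyGraph G (S : Set G)).Walk (1 : G) w), q.IsPath ∧
        q.length = p.length ∧ (QuotientGroup.mk w : G ⧸ N) = v ∧
          q.support.map (QuotientGroup.mk : G → G ⧸ N) = p.support) ∧
    (∀ n : ℕ, sawCount (cayleyGraph (G ⧸ N) ((QuotientGroup.mk : G → G ⧸ N) '' S)) 1 n ≤
        sawCount (cayleyGraph G (S : Set G)) 1 n) ∧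
    ∀ μ₁ μ₂ : ℝ,
      Filter.Tendsto (fun n : ℕ =>
          (sawCount (cayleyGraph (G ⧸ N) ((QuotientGroup.mk : G → G ⧸ N) '' S)) 1 n : ℝ)
            ^ (1 / (n : ℝ))) Filter.atTop (nhds μ₁) →
      Filter.Tendsto (fun n : ℕ =>
          (sawCount (cayleyGraph G (S : Set G)) 1 n : ℝ) ^ (1 / (n : ℝ)))
        Filter.atTop (nhds μ₂) →
      μ₁ ≤ μ₂ := by
  have hlift := cayleyGraph_liftsAdj (QuotientGroup.mk' N) (S : Set G)
  have hcount : ∀ n : ℕ,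
      sawCount (cayleyGraph (G ⧸ N) ((QuotientGroup.mk : G → G ⧸ N) '' S)) 1 n ≤
        sawCount (cayleyGraph G (S : Set G)) 1 n := fun n =>
    hlift.sawCount_le <|
      Walk.finite_isPath_length (cayleyGraph_neighborSet_finite S.finite_toSet) 1 n
  refine ⟨fun v p hp => hlift.exists_path_lift hp (map_one _), hcount,
    fun μ₁ μ₂ h₁ h₂ => le_of_tendsto_of_tendsto' h₁ h₂ fun n => ?_⟩
  exact Real.rpow_le_rpow (by positivity) (by exact_mod_cast hcount n) (by positivity)

/-- Self-avoiding walks in the Cayley graph of a quotient lift to self-avoiding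
walks in the Cayley graph of the group; consequently the SAW counts, and hence the
connective constants, can only decrease when passing to a quotient. -/
theorem saw_quotient_lift_and_mu_le (G : Type*) [Group G] (S : Finset G)
    (hgen : Subgroup.closure (S : Set G) = ⊤) (N : Subgroup G) [N.Normal] :
    (∀ (v : G ⧸ N) (p : (cayleyGraph (G ⧸ N) ((QuotientGroup.mk : G → G ⧸ N) '' S)).Walk
        (1 : G ⧸ N) v), p.IsPath →
      ∃ (w : G) (q : (cayleyGraph G (S : Set G)).Walk (1 : G) w), q.IsPath ∧
        q.length = p.length ∧ (QuotientGroup.mk w : G ⧸ N) = v ∧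
          q.support.map (QuotientGroup.mk : G → G ⧸ N) = p.support) ∧
    (∀ n : ℕ, sawCount (cayleyGraph (G ⧸ N) ((QuotientGroup.mk : G → G ⧸ N) '' S)) 1 n ≤
        sawCount (cayleyGraph G (S : Set G)) 1 n) ∧
    ∀ μ₁ μ₂ : ℝ,
      Filter.Tendsto (fun n : ℕ =>
          (sawCount (cayleyGraph (G ⧸ N) ((QuotientGroup.mk : G → G ⧸ N) '' S)) 1 n : ℝ)
            ^ (1 / (n : ℝ))) Filter.atTop (nhds μ₁) →
      Filter.Tendsto (fun n : ℕ =>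
          (sawCount (cayleyGraph G (S : Set G)) 1 n : ℝ) ^ (1 / (n : ℝ)))
        Filter.atTop (nhds μ₂) →
      μ₁ ≤ μ₂ :=
  saw_quotient_lift_and_mu_le_general G S N
end
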